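/- arXiv:2410.23885 — 8 statements merged into one kernel-verified Lean document; each statement's English description precedes it below -/
import Mathlib

section
/- Let n ≥ 1, let I ⊆ {0,…,2^n − 1}, and let σ be a permutation of Fin n with σ(n−1) = n−1 that stabilizes I. Since σ fixes n−1, it restricts to a permutation σ' of Fin (n−1) with σ'(k) = σ(k) for all k < n−1. Then σ' stabilizes the high nested subset I^h. -/
/-- `digitPerm σ i` permutes the (LSB-first) binary digits of `i` according to `σ`. -/
def digitPerm {n : ℕ} (σ : Equiv.Perm (Fin n)) (i : ℕ) : ℕ :=
  ∑ k : Fin n, if Nat.testBit i k.val then 2 ^ ((σ k).val) else 0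

/-- `σ` stabilizes the set `I`. -/
def Stabilizes {n : ℕ} (σ : Equiv.Perm (Fin n)) (I : Set ℕ) : Prop :=
  ∀ i ∈ I, digitPerm σ i ∈ I

/-- High nested subset `I^h`. -/
def highNested (n : ℕ) (I : Set ℕ) : Set ℕ :=
  {j | ∃ i ∈ I, 2 ^ (n - 1) ≤ i ∧ j = i - 2 ^ (n - 1)}

/-! A permutation fixing the top digit position keeps the leading bit `2^m` of
`2^m + j` in place and acts on the lower digits `j` as its restriction, so
`digitPerm σ (2^m + j) = 2^m + digitPerm σ' j`; the elements `2^m + j` of `I` are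
exactly the encodings of the elements `j` of `I^h`. -/

theorem digitPerm_two_pow_add {m : ℕ} {σ : Equiv.Perm (Fin (m + 1))}
    (hσ : σ (Fin.last m) = Fin.last m) {σ' : Equiv.Perm (Fin m)}
    (hσ' : ∀ k : Fin m, (σ' k : ℕ) = σ k.castSucc) {j : ℕ} (hj : j < 2 ^ m) :
    digitPerm σ (2 ^ m + j) = 2 ^ m + digitPerm σ' j := by
  have hlast : (2 ^ m + j).testBit m = true := by
    rw [Nat.testBit_two_pow_add_eq, Nat.testBit_lt_two_pow hj, Bool.not_false]
  rw [digitPerm, Fin.sum_univ_castSucc, add_comm, Fin.val_last, hlast, hσ, if_pos rfl,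
    Fin.val_last]
  congr 1
  refine Finset.sum_congr rfl fun k _ => ?_
  rw [Fin.val_castSucc, Nat.testBit_two_pow_add_gt k.isLt, hσ' k]

theorem exists_two_pow_add_mem_of_mem_highNested {m : ℕ} {I : Set ℕ}
    (hI : I ⊆ {i | i < 2 ^ (m + 1)}) {j : ℕ} (hj : j ∈ highNested (m + 1) I) :
    j < 2 ^ m ∧ 2 ^ m + j ∈ I := by
  obtain ⟨i, hiI, hle, rfl⟩ := hj
  have hlt : i < 2 ^ m * 2 := pow_succ 2 m ▸ hI hiI
  rw [Nat.add_sub_cancel_right] at hle ⊢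
  exact ⟨by omega, by rwa [Nat.add_sub_cancel' hle]⟩

theorem mem_highNested_of_two_pow_add_mem {m : ℕ} {I : Set ℕ} {j : ℕ}
    (hj : 2 ^ m + j ∈ I) : j ∈ highNested (m + 1) I :=
  ⟨2 ^ m + j, hj, Nat.le_add_right _ _, (Nat.add_sub_cancel_left _ _).symm⟩

theorem restriction_stabilizes_high {n : ℕ} (hn : 1 ≤ n) (I : Set ℕ)
    (hI : I ⊆ {i | i < 2 ^ n}) (σ : Equiv.Perm (Fin n))
    (hσ : σ ⟨n - 1, by omega⟩ = ⟨n - 1, by omega⟩)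
    (hstab : Stabilizes σ I)
    (σ' : Equiv.Perm (Fin (n - 1)))
    (hσ' : ∀ k : Fin (n - 1), ((σ' k : ℕ)) = ((σ ⟨k.val, by omega⟩ : Fin n) : ℕ)) :
    Stabilizes σ' (highNested n I) := by
  obtain ⟨m, rfl⟩ : ∃ m, n = m + 1 := ⟨n - 1, by omega⟩
  intro j hj
  obtain ⟨hjlt, hjI⟩ := exists_two_pow_add_mem_of_mem_highNested hI hj
  apply mem_highNested_of_two_pow_add_mem
  rw [← digitPerm_two_pow_add hσ hσ' hjlt]
  exact hstab _ hjI
end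

section
/- (Symmetric Subcodes) Let n ≥ 1 and let s = [s₁,…,s_m] be a list of positive integers with s₁ + ⋯ + s_m = n. Let I ⊆ {0,…,2^n − 1} and suppose that every s-block-preserving permutation of Fin n stabilizes I. Define s' = [s₁,…,s_{m−1}, s_m − 1] if s_m ≥ 2, and s' = [s₁,…,s_{m−1}] if s_m = 1. Then every s'-block-preserving permutation of Fin (n−1) stabilizes both the low nested subset I^ℓ and the high nested subset I^h. -/
/-- Low nested subset `I^ℓ`. -/
def lowNested (n : ℕ) (I : Set ℕ) : Set ℕ := {i ∈ I | i < 2 ^ (n - 1)}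

/-- `σ` is block-preserving for the block-size profile `s`: every position in the
`k`-th block (whose positions are `[ (s.take k).sum, (s.take (k+1)).sum )`) is mapped
into the same block. -/
def BlockPreserving {n : ℕ} (s : List ℕ) (σ : Equiv.Perm (Fin n)) : Prop :=
  ∀ k < s.length, ∀ p : Fin n,
    (s.take k).sum ≤ p.val → p.val < (s.take (k + 1)).sum →
    ((s.take k).sum ≤ (σ p).val ∧ (σ p).val < (s.take (k + 1)).sum)

/-!
Extend a permutation `σ` of the low `n - 1` digit positions to all `n` positions by fixing the
top one. Shrinking the last block of `s` keeps all other block boundaries, so the extension of an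
`s'`-block-preserving `σ` is `s`-block-preserving and hence stabilizes `I`. Since the extension
fixes the top digit and acts as `σ` on the others, it restricts to `σ` on `I^ℓ` and, after
removing the top digit, on `I^h`.
-/

open Equiv Finset

def extendLast {m : ℕ} (σ : Perm (Fin m)) : Perm (Fin (m + 1)) :=
  finSuccEquivLast.symm.permCongr σ.optionCongr

section extendLast

variable {m : ℕ} (σ : Perm (Fin m))

@[simp]
lemma extendLast_castSucc (k : Fin m) : extendLast σ k.castSucc = (σ k).castSucc := by
  simp [extendLast, finSuccEquivLast_castSucc, finSuccEquivLast_symm_some]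

@[simp]
lemma extendLast_last : extendLast σ (Fin.last m) = Fin.last m := by
  simp [extendLast, finSuccEquivLast_last]

lemma digitPerm_lt_two_pow (i : ℕ) : digitPerm σ i < 2 ^ m :=
  calc digitPerm σ i ≤ ∑ k : Fin m, 2 ^ (σ k).val :=
        sum_le_sum fun k _ => by split_ifs <;> simp
    _ = ∑ k ∈ range m, 2 ^ k := by
        rw [Equiv.sum_comp σ (fun k : Fin m => 2 ^ k.val), Fin.sum_univ_eq_sum_range]
    _ < 2 ^ m := Nat.geomSum_lt le_rfl (by simp)

lemma digitPerm_two_pow_add_s3 (j : ℕ) : digitPerm σ (2 ^ m + j) = digitPerm σ j :=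
  sum_congr rfl fun k _ => by rw [Nat.testBit_two_pow_add_gt k.isLt]

lemma digitPerm_extendLast (i : ℕ) :
    digitPerm (extendLast σ) i = digitPerm σ i + if i.testBit m then 2 ^ m else 0 := by
  simp [digitPerm, Fin.sum_univ_castSucc]

lemma digitPerm_extendLast_of_lt {i : ℕ} (hi : i < 2 ^ m) :
    digitPerm (extendLast σ) i = digitPerm σ i := by
  simp [digitPerm_extendLast, Nat.testBit_eq_false_of_lt hi]

lemma digitPerm_extendLast_two_pow_add {j : ℕ} (hj : j < 2 ^ m) :
    digitPerm (extendLast σ) (2 ^ m + j) = 2 ^ m + digitPerm σ j := by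
  rw [digitPerm_extendLast, Nat.testBit_two_pow_add_eq, Nat.testBit_eq_false_of_lt hj,
    digitPerm_two_pow_add_s3, Bool.not_false, if_pos rfl, add_comm]

variable {σ} {I : Set ℕ}

lemma Stabilizes.lowNested_of_extendLast (h : Stabilizes (extendLast σ) I) :
    Stabilizes σ (lowNested (m + 1) I) := by
  rintro i ⟨hiI, hi⟩
  rw [Nat.add_sub_cancel] at hi
  exact ⟨digitPerm_extendLast_of_lt σ hi ▸ h i hiI, by simpa using digitPerm_lt_two_pow σ i⟩

lemma Stabilizes.highNested_of_extendLast (h : Stabilizes (extendLast σ) I)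
    (hI : I ⊆ {i | i < 2 ^ (m + 1)}) : Stabilizes σ (highNested (m + 1) I) := by
  rintro _ ⟨i, hiI, hle, rfl⟩
  rw [Nat.add_sub_cancel] at hle
  obtain ⟨j, rfl⟩ := Nat.exists_eq_add_of_le hle
  have hj : j < 2 ^ m := by
    have : 2 ^ m + j < 2 ^ m * 2 := pow_succ 2 m ▸ hI hiI
    omega
  refine ⟨2 ^ m + digitPerm σ j, ?_, by simp, by simp⟩
  simpa [digitPerm_extendLast_two_pow_add σ hj] using h _ hiI

/-- The last block of `s` may end later than that of `s'`, at `s.sum ≥ m`; the extra position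
`m` of `Fin (m + 1)` is fixed anyway. -/
lemma BlockPreserving.extendLast {s s' : List ℕ} (h : BlockPreserving s' σ)
    (hsum' : s'.sum = m) (hsum : m ≤ s.sum) (hlen : s'.length ≤ s.length)
    (htake : ∀ k < s.length, s.take k = s'.take k) :
    BlockPreserving s (extendLast σ) := by
  intro k hk p hlo hhi
  obtain ⟨q, rfl⟩ | rfl := p.eq_castSucc_or_eq_last
  · simp only [Fin.val_castSucc, extendLast_castSucc] at hlo hhi ⊢
    rw [htake k hk] at hlo ⊢
    have hk' : k < s'.length := by
      by_contra hk'
      rw [List.take_of_length_le (by omega), hsum'] at hlo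
      omega
    obtain ⟨hhi', hup⟩ : q < (s'.take (k + 1)).sum ∧
        (s'.take (k + 1)).sum ≤ (s.take (k + 1)).sum := by
      by_cases hk1 : k + 1 < s.length
      · rw [← htake _ hk1]
        exact ⟨hhi, le_rfl⟩
      · rw [List.take_of_length_le (by omega), List.take_of_length_le (by omega), hsum']
        exact ⟨q.isLt, hsum⟩
    obtain ⟨h₁, h₂⟩ := h k hk' q hlo hhi'
    exact ⟨h₁, h₂.trans_le hup⟩
  · simpa using ⟨hlo, hhi⟩

end extendLast

theorem symmetric_subcodes_general {n : ℕ}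
    (s : List ℕ) (hne : s ≠ []) (hsum : s.sum = n)
    (I : Set ℕ) (hI : I ⊆ {i | i < 2 ^ n})
    (hstab : ∀ σ : Equiv.Perm (Fin n), BlockPreserving s σ → Stabilizes σ I)
    (s' : List ℕ)
    (hs' : (2 ≤ s.getLast hne ∧ s' = s.dropLast ++ [s.getLast hne - 1]) ∨
           (s.getLast hne = 1 ∧ s' = s.dropLast)) :
    ∀ σ' : Equiv.Perm (Fin (n - 1)), BlockPreserving s' σ' →
      Stabilizes σ' (lowNested n I) ∧ Stabilizes σ' (highNested n I) := by
  set L := s.dropLast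
  set a := s.getLast hne
  have hs : s = L ++ [a] := (List.dropLast_append_getLast hne).symm
  obtain ⟨t, ht, rfl, htsum⟩ : ∃ t : List ℕ, t.length ≤ 1 ∧ s' = L ++ t ∧ t.sum + 1 = a := by
    rcases hs' with ⟨ha, rfl⟩ | ⟨ha, rfl⟩
    exacts [⟨[a - 1], by simp, rfl, by rw [List.sum_singleton]; omega⟩,
      ⟨[], by simp, by simp, by simp [ha]⟩]
  have hsum' : (L ++ t).sum + 1 = n := by
    rw [← hsum, hs, List.sum_append, List.sum_append, List.sum_singleton]; omega
  obtain ⟨m, rfl⟩ : ∃ m, n = m + 1 := ⟨_, hsum'.symm⟩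
  have htake : ∀ k < s.length, s.take k = (L ++ t).take k := fun k hk => by
    rw [hs, List.length_append, List.length_singleton] at hk
    rw [hs, List.take_append_of_le_length (by omega), List.take_append_of_le_length (by omega)]
  intro σ hσ
  have hext := hstab _ (hσ.extendLast (by omega) (by omega) (by simp [hs, ht]) htake)
  exact ⟨hext.lowNested_of_extendLast, hext.highNested_of_extendLast hI⟩

/-- **Symmetric Subcodes.** If all `s`-block-preserving permutations stabilize `I`,
then all `s'`-block-preserving permutations stabilize both nested subsets, where `s'`
is `s` with its last entry reduced by one (the last entry being dropped if it is `1`). -/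
theorem symmetric_subcodes {n : ℕ} (hn : 1 ≤ n)
    (s : List ℕ) (hne : s ≠ []) (hpos : ∀ x ∈ s, 0 < x) (hsum : s.sum = n)
    (I : Set ℕ) (hI : I ⊆ {i | i < 2 ^ n})
    (hstab : ∀ σ : Equiv.Perm (Fin n), BlockPreserving s σ → Stabilizes σ I)
    (s' : List ℕ)
    (hs' : (2 ≤ s.getLast hne ∧ s' = s.dropLast ++ [s.getLast hne - 1]) ∨
           (s.getLast hne = 1 ∧ s' = s.dropLast)) :
    ∀ σ' : Equiv.Perm (Fin (n - 1)), BlockPreserving s' σ' →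
      Stabilizes σ' (lowNested n I) ∧ Stabilizes σ' (highNested n I) :=
  symmetric_subcodes_general s hne hsum I hI hstab s' hs'
end

section
/- Let n, l, l' be natural numbers with l < l' < n, and let i < 2^n satisfy Nat.testBit i l = true and Nat.testBit i l' = false. Then i ≼ₙ (i − 2^l + 2^(l')); that is, moving a single 1-digit of i to a more significant position among the first n binary digits yields an index above i in the universal partial order (the move is generated by adjacent left-swap steps). -/
/-!
Write `i = j + 2 ^ l` with bits `l` and `l'` of `j` clear and induct on `l'`. To carry the digit
from `l` to `l' + 1`: if bit `l'` of `j` is clear, carry it to `l'` and swap it up once more; if it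
is set, first swap that digit of `j` up to `l' + 1`, which frees position `l'`, and then carry the
digit from `l` to `l'`. Only left-swap steps are needed.
-/

/-- Left-swap step: a single `1` digit of `i` is moved one position up. -/
def LeftSwapStep (n i j : ℕ) : Prop :=
  ∃ l, l + 1 < n ∧ Nat.testBit i l = true ∧ Nat.testBit i (l + 1) = false ∧
    j = i - 2 ^ l + 2 ^ (l + 1)

/-- Binary-domination step at `n` bits. -/
def BinDomStep (n i j : ℕ) : Prop :=
  j < 2 ^ n ∧ ∀ k, Nat.testBit i k ≤ Nat.testBit j k

/-- Universal partial order at `n` bits: reflexive-transitive closure of the union of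
left-swap and binary-domination steps. -/
def UPO (n : ℕ) : ℕ → ℕ → Prop :=
  Relation.ReflTransGen (fun i j => LeftSwapStep n i j ∨ BinDomStep n i j)

theorem Nat.testBit_add_two_pow {x m : ℕ} (h : x.testBit m = false) (k : ℕ) :
    (x + 2 ^ m).testBit k = (x.testBit k || decide (k = m)) := by
  induction m generalizing x k with
  | zero =>
    simp only [Nat.testBit_zero, decide_eq_false_iff_not] at h
    cases k with
    | zero =>
      simp only [pow_zero, Nat.testBit_zero, decide_true, Bool.or_true, decide_eq_true_eq]
      omega
    | succ k =>
      rw [Nat.testBit_add_one, Nat.testBit_add_one, pow_zero, show (x + 1) / 2 = x / 2 by omega]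
      simp
  | succ m ih =>
    rw [Nat.testBit_add_one] at h
    cases k with
    | zero => simp [Nat.testBit_zero, pow_succ]
    | succ k =>
      rw [Nat.testBit_add_one, Nat.testBit_add_one, pow_succ,
        show (x + 2 ^ m * 2) / 2 = x / 2 + 2 ^ m by omega, ih h]
      simp

theorem Nat.testBit_add_two_pow_of_ne {x m k : ℕ} (h : x.testBit m = false) (hk : k ≠ m) :
    (x + 2 ^ m).testBit k = x.testBit k := by
  simp [Nat.testBit_add_two_pow h, hk]

theorem Nat.exists_eq_add_two_pow_of_testBit {x m : ℕ} (h : x.testBit m = true) :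
    ∃ y, y.testBit m = false ∧ x = y + 2 ^ m := by
  have hle := Nat.ge_two_pow_of_testBit h
  refine ⟨x - 2 ^ m, ?_, by omega⟩
  have h' := Nat.testBit_two_pow_add_eq (x - 2 ^ m) m
  rw [Nat.add_sub_cancel' hle, h] at h'
  simpa using h'

theorem leftSwapStep_add_two_pow {n m j : ℕ} (hm : m + 1 < n) (h₀ : j.testBit m = false)
    (h₁ : j.testBit (m + 1) = false) : LeftSwapStep n (j + 2 ^ m) (j + 2 ^ (m + 1)) :=
  ⟨m, hm, by simp [Nat.testBit_add_two_pow h₀], by simp [Nat.testBit_add_two_pow h₀, h₁],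
    by omega⟩

theorem upo_add_two_pow {n l l' j : ℕ} (hll' : l < l') (hl'n : l' < n)
    (hl : j.testBit l = false) (hl' : j.testBit l' = false) :
    UPO n (j + 2 ^ l) (j + 2 ^ l') := by
  induction l' generalizing j with
  | zero => omega
  | succ m ih =>
    have swap {k : ℕ} (h₀ : k.testBit m = false) (h₁ : k.testBit (m + 1) = false) :
        UPO n (k + 2 ^ m) (k + 2 ^ (m + 1)) :=
      .single (.inl (leftSwapStep_add_two_pow hl'n h₀ h₁))
    obtain rfl | hlm := (Nat.lt_succ_iff.mp hll').eq_or_lt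
    · exact swap hl hl'
    cases hm : j.testBit m with
    | false => exact (ih hlm (by omega) hl hm).trans (swap hm hl')
    | true =>
      obtain ⟨k, hkm, rfl⟩ := Nat.exists_eq_add_two_pow_of_testBit hm
      rw [Nat.testBit_add_two_pow_of_ne hkm hlm.ne] at hl
      rw [Nat.testBit_add_two_pow_of_ne hkm (by omega)] at hl'
      have hswap : UPO n (k + 2 ^ m + 2 ^ l) (k + 2 ^ (m + 1) + 2 ^ l) := by
        rw [add_right_comm k (2 ^ m), add_right_comm k (2 ^ (m + 1))]
        exact swap (by rwa [Nat.testBit_add_two_pow_of_ne hl hlm.ne'])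
          (by rwa [Nat.testBit_add_two_pow_of_ne hl (by omega)])
      have hcarry : UPO n (k + 2 ^ (m + 1) + 2 ^ l) (k + 2 ^ (m + 1) + 2 ^ m) :=
        ih hlm (by omega) (by rwa [Nat.testBit_add_two_pow_of_ne hl' (by omega)])
          (by rwa [Nat.testBit_add_two_pow_of_ne hl' (by omega)])
      rw [add_right_comm k (2 ^ m) (2 ^ (m + 1))]
      exact hswap.trans hcarry

theorem upo_single_bit_move_general (n l l' i : ℕ) (hll' : l < l') (hl'n : l' < n)
    (hbl : Nat.testBit i l = true) (hbl' : Nat.testBit i l' = false) :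
    UPO n i (i - 2 ^ l + 2 ^ l') := by
  obtain ⟨j, hjl, rfl⟩ := Nat.exists_eq_add_two_pow_of_testBit hbl
  rw [Nat.testBit_add_two_pow_of_ne hjl hll'.ne'] at hbl'
  rw [Nat.add_sub_cancel]
  exact upo_add_two_pow hll' hl'n hjl hbl'

/-- Moving a single `1` digit of `i` to any more significant position below `n` yields an
index above `i` in the universal partial order. -/
theorem upo_single_bit_move (n l l' i : ℕ) (hll' : l < l') (hl'n : l' < n)
    (hi : i < 2 ^ n) (hbl : Nat.testBit i l = true) (hbl' : Nat.testBit i l' = false) :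
    UPO n i (i - 2 ^ l + 2 ^ l') :=
  upo_single_bit_move_general n l l' i hll' hl'n hbl hbl'
end

section
/- Let I ⊆ {0,…,2^n − 1} be UPO-compliant at n bits, let b ≤ n, let r < 2^(n−b), and let w ≤ b. If r + (2^w − 1)·2^(n−b) ∈ I (the index whose low n−b binary digits are those of r and whose top block of b digits consists of w ones in the least significant positions of the block), then for every p < 2^b whose binary Hamming weight is at least w, also r + p·2^(n−b) ∈ I. In other words, for a UPO-compliant set, within the top block all bit patterns of the same or higher Hamming weight are also contained. -/
/-- `I` is UPO-compliant at `n` bits: it is upward closed under the universal partial order. -/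
def UPOCompliant (n : ℕ) (I : Set ℕ) : Prop :=
  ∀ i ∈ I, ∀ j, UPO n i j → j ∈ I

/-- Binary Hamming weight of a natural number (number of `1` digits). -/
def hammingWeight (p : ℕ) : ℕ := (Nat.digits 2 p).count 1

private lemma hw_zero : hammingWeight 0 = 0 := by simp [hammingWeight]

private lemma hw_div2 (p : ℕ) : hammingWeight p = hammingWeight (p / 2) + p % 2 := by
  rcases Nat.eq_zero_or_pos p with rfl | hp
  · simp [hammingWeight]
  · show (Nat.digits 2 p).count 1 = (Nat.digits 2 (p/2)).count 1 + p % 2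
    rw [Nat.digits_def' (by norm_num : 1 < 2) hp]
    rcases Nat.mod_two_eq_zero_or_one p with h | h <;> simp [h, List.count_cons]

private lemma hw_one : hammingWeight 1 = 1 := by
  have := hw_div2 1
  simpa [hw_zero] using this

private lemma hw_block (m : ℕ) : ∀ a c : ℕ, c < 2 ^ m →
    hammingWeight (2 ^ m * a + c) = hammingWeight a + hammingWeight c := by
  induction m with
  | zero =>
    intro a c hc
    have : c = 0 := by omega
    subst this
    simp [hw_zero]
  | succ m ih =>
    intro a c hc
    have hp : 2 ^ (m+1) * a = 2 * (2 ^ m * a) := by rw [pow_succ]; ring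
    have hp2 : 2 ^ (m+1) = 2 * 2 ^ m := by rw [pow_succ]; ring
    have h2 : c / 2 < 2 ^ m := by omega
    have key := hw_div2 (2 ^ (m+1) * a + c)
    have d1 : (2 ^ (m+1) * a + c) / 2 = 2 ^ m * a + c / 2 := by rw [hp]; omega
    have d2 : (2 ^ (m+1) * a + c) % 2 = c % 2 := by rw [hp]; omega
    rw [d1, d2, ih _ _ h2] at key
    have := hw_div2 c
    omega

private lemma dc_eq (q : ℕ) : (∀ l, Nat.testBit q (l+1) = true → Nat.testBit q l = true) →
    q = 2 ^ hammingWeight q - 1 := by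
  induction q using Nat.strong_induction_on with
  | _ q ih =>
  intro h
  rcases eq_or_ne q 0 with rfl | h0
  · simp [hw_zero]
  have hq2 : q / 2 < q := Nat.div_lt_self (Nat.pos_of_ne_zero h0) one_lt_two
  have hodd : q % 2 = 1 := by
    by_contra hne
    have heven : q % 2 = 0 := by omega
    have hm0 : q / 2 ≠ 0 := by omega
    obtain ⟨k, hk⟩ : ∃ k, Nat.testBit (q/2) k = true := by
      by_contra hall
      push_neg at hall
      exact hm0 (Nat.zero_of_testBit_eq_false fun i => by
        have := hall i; simpa using this)
    have h1 : Nat.testBit q (k+1) = true := by rw [Nat.testBit_add_one]; exact hk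
    have down : ∀ j, Nat.testBit q j = true → Nat.testBit q 0 = true := by
      intro j
      induction j with
      | zero => exact id
      | succ j ihj => intro hj; exact ihj (h j hj)
    have h0b : Nat.testBit q 0 = true := down _ h1
    rw [Nat.testBit_zero] at h0b
    simp at h0b
    omega
  have hmh : ∀ l, Nat.testBit (q/2) (l+1) = true → Nat.testBit (q/2) l = true := by
    intro l hl
    have := h (l+1) (by rw [Nat.testBit_add_one]; exact hl)
    rw [Nat.testBit_add_one] at this
    exact this
  have hm := ih _ hq2 hmh
  have hwr := hw_div2 q
  have hpow : 1 ≤ 2 ^ hammingWeight (q/2) := Nat.one_le_two_pow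
  rw [hodd] at hwr
  rw [hwr, pow_succ]
  omega

private lemma exists_subset : ∀ p w : ℕ, w ≤ hammingWeight p →
    ∃ q, hammingWeight q = w ∧ (∀ k, Nat.testBit q k ≤ Nat.testBit p k) ∧ q ≤ p := by
  intro p
  induction p using Nat.strong_induction_on with
  | _ p ih =>
  intro w hwle
  rcases Nat.eq_zero_or_pos w with rfl | hw0
  · exact ⟨0, hw_zero, fun k => by simp [Nat.zero_testBit], Nat.zero_le _⟩
  have hp0 : p ≠ 0 := by
    rintro rfl
    rw [hw_zero] at hwle
    omega
  have hlt : p / 2 < p := Nat.div_lt_self (Nat.pos_of_ne_zero hp0) one_lt_two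
  have hrec := hw_div2 p
  rcases Nat.mod_two_eq_zero_or_one p with hs | hs
  · obtain ⟨q', hq1, hq2, hq3⟩ := ih _ hlt w (by omega)
    refine ⟨2*q', ?_, ?_, by omega⟩
    · have e := hw_div2 (2*q')
      rw [show 2*q'/2 = q' by omega, show (2*q') % 2 = 0 by omega] at e
      omega
    · intro k
      cases k with
      | zero =>
        have : Nat.testBit (2*q') 0 = false := by
          simp [Nat.testBit_zero, Nat.mul_mod_right]
        simp [this]
      | succ k =>
        rw [Nat.testBit_add_one, Nat.testBit_add_one, show 2*q'/2 = q' by omega]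
        exact hq2 k
  · obtain ⟨q', hq1, hq2, hq3⟩ := ih _ hlt (w-1) (by omega)
    refine ⟨2*q'+1, ?_, ?_, by omega⟩
    · have e := hw_div2 (2*q'+1)
      rw [show (2*q'+1)/2 = q' by omega, show (2*q'+1) % 2 = 1 by omega] at e
      omega
    · intro k
      cases k with
      | zero =>
        have h2 : Nat.testBit p 0 = true := by simp [Nat.testBit_zero, hs]
        have h1 : Nat.testBit (2*q'+1) 0 = true := by
          simp [Nat.testBit_zero, Nat.mul_add_mod]
        simp [h1, h2]
      | succ k =>
        rw [Nat.testBit_add_one, Nat.testBit_add_one, show (2*q'+1)/2 = q' by omega]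
        exact hq2 k

private def BStep (b q q' : ℕ) : Prop :=
  ∃ l, l + 1 < b ∧ Nat.testBit q l = true ∧ Nat.testBit q (l+1) = false ∧
    q' = q - 2 ^ l + 2 ^ (l+1)

private lemma chain (b w : ℕ) : ∀ q, q < 2 ^ b → hammingWeight q = w →
    Relation.ReflTransGen (BStep b) (2 ^ w - 1) q := by
  intro q
  induction q using Nat.strong_induction_on with
  | _ q ih =>
  intro hqb hqw
  by_cases hdesc : ∃ l, Nat.testBit q l = false ∧ Nat.testBit q (l+1) = true
  · obtain ⟨l, hb1, hb2⟩ := hdesc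
    have hge : 2 ^ (l+1) ≤ q := Nat.ge_two_pow_of_testBit hb2
    have hlb : l + 1 < b := by
      by_contra hcon
      push_neg at hcon
      have := Nat.pow_le_pow_right (by norm_num : 0 < 2) hcon
      omega
    have e1 : q / 2 ^ l % 2 = 0 := by
      have h := Nat.testBit_eq_decide_div_mod_eq (x := q) (i := l)
      rw [hb1] at h
      simp at h
      omega
    have e2 : q / 2 ^ (l+1) % 2 = 1 := by
      have h := Nat.testBit_eq_decide_div_mod_eq (x := q) (i := l+1)
      rw [hb2] at h
      simp at h
      omega
    have m1 : q % 2 ^ (l+1) = q % 2 ^ l := by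
      rw [pow_succ, Nat.mod_mul, e1]
      simp
    have m2 : q % 2 ^ (l+2) = 2 ^ (l+1) + q % 2 ^ l := by
      rw [show l+2 = (l+1)+1 from rfl, pow_succ, Nat.mod_mul, e2, m1, mul_one]
      omega
    have hdm := Nat.div_add_mod q (2 ^ (l+2))
    obtain ⟨a, c, hc, rfl⟩ : ∃ a c, c < 2 ^ l ∧ q = 2 ^ (l+2) * a + (2 ^ (l+1) + c) := by
      refine ⟨q / 2 ^ (l+2), q % 2 ^ l, Nat.mod_lt _ (Nat.two_pow_pos l), ?_⟩
      omega
    have p1 : 2 ^ (l+1) = 2 * 2 ^ l := by rw [pow_succ]; ring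
    have p2 : 2 ^ (l+2) = 2 * 2 ^ (l+1) := by rw [pow_succ]; ring
    have hpl : 1 ≤ 2 ^ l := Nat.one_le_two_pow
    have hlow : 2 ^ l + c < 2 ^ (l+2) := by omega
    have hlow2 : 2 ^ (l+1) + c < 2 ^ (l+2) := by omega
    set q₀ := 2 ^ (l+2) * a + (2 ^ l + c) with hq0def
    have hq0lt : q₀ < 2 ^ (l+2) * a + (2 ^ (l+1) + c) := by omega
    have hw1 : hammingWeight (2 ^ (l+2) * a + (2 ^ (l+1) + c)) =
        hammingWeight a + (1 + hammingWeight c) := by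
      rw [hw_block _ _ _ hlow2]
      congr 1
      rw [show 2 ^ (l+1) + c = 2 ^ (l+1) * 1 + c by ring,
        hw_block _ _ _ (show c < 2 ^ (l+1) by omega), hw_one]
    have hw0 : hammingWeight q₀ = hammingWeight a + (1 + hammingWeight c) := by
      rw [hq0def, hw_block _ _ _ hlow]
      congr 1
      rw [show 2 ^ l + c = 2 ^ l * 1 + c by ring, hw_block _ _ _ hc, hw_one]
    have tb_l : Nat.testBit q₀ l = true := by
      rw [hq0def, Nat.testBit_two_pow_mul_add a hlow l, if_pos (by omega)]
      have h := Nat.testBit_two_pow_mul_add 1 hc l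
      rw [mul_one] at h
      rw [h, if_neg (lt_irrefl l)]
      simp [Nat.testBit_zero]
    have tb_l1 : Nat.testBit q₀ (l+1) = false := by
      rw [hq0def, Nat.testBit_two_pow_mul_add a hlow (l+1), if_pos (by omega)]
      exact Nat.testBit_lt_two_pow (by omega)
    have hjeq : 2 ^ (l+2) * a + (2 ^ (l+1) + c) = q₀ - 2 ^ l + 2 ^ (l+1) := by omega
    exact (ih q₀ hq0lt (by omega) (by omega)).tail ⟨l, hlb, tb_l, tb_l1, hjeq⟩
  · push_neg at hdesc
    have hdc : ∀ l, Nat.testBit q (l+1) = true → Nat.testBit q l = true := by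
      intro l h1
      cases h : Nat.testBit q l with
      | true => rfl
      | false => exact absurd h1 (hdesc l h)
    have := dc_eq q hdc
    rw [hqw] at this
    rw [this]

private lemma tb (m r q k : ℕ) (hr : r < 2 ^ m) :
    Nat.testBit (r + q * 2 ^ m) k =
      if k < m then Nat.testBit r k else Nat.testBit q (k - m) := by
  rw [show r + q * 2 ^ m = 2 ^ m * q + r by ring]
  exact Nat.testBit_two_pow_mul_add q hr k

private lemma lswap_lift (n b m r : ℕ) (hm : m = n - b) (hb : b ≤ n) (hr : r < 2 ^ m)
    {q q' : ℕ} (h : BStep b q q') :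
    LeftSwapStep n (r + q * 2 ^ m) (r + q' * 2 ^ m) := by
  obtain ⟨l, hl, h1, h2, h3⟩ := h
  refine ⟨l + m, by omega, ?_, ?_, ?_⟩
  · rw [tb m r q (l+m) hr, if_neg (by omega), Nat.add_sub_cancel]
    exact h1
  · rw [show l + m + 1 = (l + 1) + m by ring, tb m r q ((l+1)+m) hr,
      if_neg (by omega), Nat.add_sub_cancel]
    exact h2
  · have h2l : 2 ^ l ≤ q := Nat.ge_two_pow_of_testBit h1
    have e : q' * 2 ^ m = q * 2 ^ m - 2 ^ l * 2 ^ m + 2 ^ (l+1) * 2 ^ m := by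
      rw [h3, Nat.add_mul, Nat.sub_mul]
    have eB : 2 ^ (l + m) = 2 ^ l * 2 ^ m := by rw [pow_add]
    have eC : 2 ^ (l + m + 1) = 2 ^ (l+1) * 2 ^ m := by
      rw [show l + m + 1 = (l+1) + m by ring, pow_add]
    have hBA : 2 ^ l * 2 ^ m ≤ q * 2 ^ m := Nat.mul_le_mul_right _ h2l
    omega

private lemma dom_lift (n b m r p q : ℕ) (hm : m = n - b) (hb : b ≤ n) (hr : r < 2 ^ m)
    (hp : p < 2 ^ b) (hsub : ∀ k, Nat.testBit q k ≤ Nat.testBit p k) :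
    BinDomStep n (r + q * 2 ^ m) (r + p * 2 ^ m) := by
  constructor
  · have h1 : p * 2 ^ m ≤ (2 ^ b - 1) * 2 ^ m := Nat.mul_le_mul_right _ (by omega)
    have h2 : (2 ^ b - 1) * 2 ^ m = 2 ^ b * 2 ^ m - 2 ^ m := by
      rw [Nat.sub_mul, one_mul]
    have h3 : 2 ^ b * 2 ^ m = 2 ^ n := by rw [← pow_add]; congr 1; omega
    have h5 : 2 ^ m ≤ 2 ^ b * 2 ^ m := Nat.le_mul_of_pos_left _ (Nat.two_pow_pos b)
    omega
  · intro k
    rw [tb m r q k hr, tb m r p k hr]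
    split_ifs with h
    · exact le_refl _
    · exact hsub (k - m)

/-- For a UPO-compliant set, within the top block of `b` digits, all bit patterns of the
same or higher Hamming weight are also contained. -/
theorem upo_compliant_top_block_weight (n b r w : ℕ) (I : Set ℕ)
    (hI : I ⊆ Set.Iio (2 ^ n)) (hcompl : UPOCompliant n I)
    (hb : b ≤ n) (hr : r < 2 ^ (n - b)) (hw : w ≤ b)
    (hmem : r + (2 ^ w - 1) * 2 ^ (n - b) ∈ I) :
    ∀ p < 2 ^ b, w ≤ hammingWeight p → r + p * 2 ^ (n - b) ∈ I := by
  intro p hp hwp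
  obtain ⟨q, hq1, hq2, hq3⟩ := exists_subset p w hwp
  have hqb : q < 2 ^ b := lt_of_le_of_lt hq3 hp
  have hchain := chain b w q hqb hq1
  have hlift : Relation.ReflTransGen (fun i j => LeftSwapStep n i j ∨ BinDomStep n i j)
      (r + (2 ^ w - 1) * 2 ^ (n - b)) (r + q * 2 ^ (n - b)) :=
    hchain.lift (fun x => r + x * 2 ^ (n - b))
      (fun x y hxy => Or.inl (lswap_lift n b (n - b) r rfl hb hr hxy))
  have hdom : BinDomStep n (r + q * 2 ^ (n - b)) (r + p * 2 ^ (n - b)) :=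
    dom_lift n b (n - b) r p q rfl hb hr hp hq2
  exact hcompl _ hmem _ (hlift.tail (Or.inr hdom))
end

section
/- Let S ⊆ {0,…,2^n − 1}, let t : ℕ, and set I = cl_n(S) and I' = cl_{n+t}(S). Then for every i ∈ I and every τ < 2^t, the index i + τ·2^n belongs to I'. (In particular, by binary domination, every information index of the length-2^n code reappears shifted into every length-2^n block of the length-2^(n+t) code.) -/
/-- UPO closure of `S` at `n` bits. -/
def upoClosure (n : ℕ) (S : Set ℕ) : Set ℕ :=
  {j | j < 2 ^ n ∧ ∃ i ∈ S, UPO n i j}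

theorem UPO_mono {n m : ℕ} (hnm : n ≤ m) {i j : ℕ} (h : UPO n i j) : UPO m i j := by
  induction h with
  | refl => exact Relation.ReflTransGen.refl
  | tail _ hstep ih =>
    refine ih.tail ?_
    rcases hstep with ⟨l, hl, h1, h2, h3⟩ | ⟨h1, h2⟩
    · exact Or.inl ⟨l, lt_of_lt_of_le hl hnm, h1, h2, h3⟩
    · exact Or.inr ⟨lt_of_lt_of_le h1 (Nat.pow_le_pow_right (by norm_num) hnm), h2⟩

/-- Every index in the UPO closure of `S` at `n` bits reappears, shifted by `τ · 2^n` for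
every `τ < 2^t`, in the UPO closure of `S` at `n + t` bits. -/
theorem upoClosure_shifted (n t : ℕ) (S : Set ℕ) (hS : S ⊆ Set.Iio (2 ^ n)) :
    ∀ i ∈ upoClosure n S, ∀ τ < 2 ^ t, i + τ * 2 ^ n ∈ upoClosure (n + t) S := by
  rintro i ⟨hi, s, hs, hupo⟩ τ hτ
  have hbound : i + τ * 2 ^ n < 2 ^ (n + t) := by
    calc i + τ * 2 ^ n < (τ + 1) * 2 ^ n := by rw [add_mul, one_mul]; omega
    _ ≤ 2 ^ t * 2 ^ n := by gcongr; omega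
    _ = 2 ^ (n + t) := by rw [← pow_add]; ring_nf
  refine ⟨hbound, s, hs, ?_⟩
  refine (UPO_mono (Nat.le_add_right n t) hupo).tail (Or.inr ⟨hbound, fun k => ?_⟩)
  rw [show i + τ * 2 ^ n = 2 ^ n * τ + i by ring, Nat.testBit_two_pow_mul_add τ hi k]
  rcases lt_or_ge k n with hk | hk
  · rw [if_pos hk]
  · rw [if_neg (not_lt.mpr hk)]
    simp [Nat.testBit_lt_two_pow (lt_of_lt_of_le hi (Nat.pow_le_pow_right (by norm_num) hk))]
end

section
/- (Symmetric Supercodes) Let S ⊆ {0,…,2^n − 1} and let s = [s₁,…,s_m] be a list of positive integers with s₁ + ⋯ + s_m = n. Suppose every s-block-preserving permutation of Fin n stabilizes I = cl_n(S). Then for every t : ℕ, every [s₁,…,s_{m−1}, s_m + t]-block-preserving permutation of Fin (n+t) stabilizes I' = cl_{n+t}(S). -/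
/-!
Write `onesFrom k x` for the number of `1` digits of `x` in positions `≥ k`. For `i, j < 2 ^ N`,
`UPO N i j` holds iff `onesFrom k i ≤ onesFrom k j` for every `k`: both kinds of steps can only
increase these counts, and conversely, while the digits of `i` are not contained in those of `j`,
the top of a run of ones of `i` through a digit missing from `j` can be shifted up one place.

A block-preserving permutation keeps the counts at the block boundaries. Given `i₀ ∈ S` with
`i₀ ≼ j`, transpositions inside the blocks of `s` push the digits of `i₀` to the bottom of each
block and give `y ∈ cl_n(S)` with the same boundary counts. For such a packed `y` the boundary
counts bound all counts, and `s`, `s'` share the boundaries that matter, so `y ≼ σ' j`.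
-/

open Finset

theorem Finset.exists_run_end {A : Finset ℕ} {p : ℕ} (hp : p ∈ A) :
    ∃ l, p ≤ l ∧ Ico p (l + 1) ⊆ A ∧ l + 1 ∉ A := by
  have hex : ∃ l, p ≤ l ∧ l + 1 ∉ A :=
    ⟨p + A.sup id, by omega, fun h => by have := le_sup (f := id) h; simp only [id] at this; omega⟩
  refine ⟨Nat.find hex, (Nat.find_spec hex).1, fun q hq => ?_, (Nat.find_spec hex).2⟩
  rw [mem_Ico] at hq
  rcases hq.1.eq_or_lt with rfl | hpq
  · exact hp
  · by_contra hqA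
    have := Nat.find_min' hex (m := q - 1) ⟨by omega, by rwa [Nat.sub_add_cancel (by omega)]⟩
    omega

def bitFinset (x : ℕ) : Finset ℕ := x.bitIndices.toFinset

@[simp] theorem mem_bitFinset {x p : ℕ} : p ∈ bitFinset x ↔ x.testBit p := by
  simp [bitFinset]

@[simp] theorem bitFinset_sum_two_pow (A : Finset ℕ) : bitFinset (∑ i ∈ A, 2 ^ i) = A :=
  toFinset_bitIndices_sum_two_pow A

theorem sum_two_pow_bitFinset (x : ℕ) : ∑ i ∈ bitFinset x, 2 ^ i = x :=
  sum_toFinset_bitIndices_two_pow x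

theorem lt_two_pow_iff_bitFinset_subset {x N : ℕ} : x < 2 ^ N ↔ bitFinset x ⊆ range N := by
  refine ⟨fun hx p hp => ?_, fun h => Nat.lt_pow_two_of_testBit x fun i hi => ?_⟩
  · have := (Nat.ge_two_pow_of_testBit (mem_bitFinset.1 hp)).trans_lt hx
    exact mem_range.2 ((Nat.pow_lt_pow_iff_right (by norm_num)).1 this)
  · by_contra hb
    have := h (mem_bitFinset.2 (by simpa using hb))
    simp only [mem_range] at this
    omega

theorem bitFinset_leftSwap {x l : ℕ} (hl : l ∈ bitFinset x) (hl1 : l + 1 ∉ bitFinset x) :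
    bitFinset (x - 2 ^ l + 2 ^ (l + 1)) = insert (l + 1) ((bitFinset x).erase l) := by
  have hx := sum_two_pow_bitFinset x
  rw [← add_sum_erase _ _ hl] at hx
  rw [← bitFinset_sum_two_pow (insert (l + 1) _), sum_insert (fun h => hl1 (mem_of_mem_erase h))]
  congr 1
  omega

section DigitPerm

variable {N : ℕ}

theorem bitFinset_digitPerm (σ : Equiv.Perm (Fin N)) (x : ℕ) :
    bitFinset (digitPerm σ x) =
      ({k | x.testBit k} : Finset (Fin N)).map (σ.toEmbedding.trans Fin.valEmbedding) := by
  rw [← bitFinset_sum_two_pow (map _ _), sum_map, digitPerm, sum_filter]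
  rfl

theorem bitFinset_eq_map_of_lt {x : ℕ} (hx : x < 2 ^ N) :
    bitFinset x = ({k | x.testBit k} : Finset (Fin N)).map Fin.valEmbedding := by
  ext p
  simp only [mem_map, mem_filter, mem_univ, true_and, Fin.valEmbedding_apply, mem_bitFinset]
  refine ⟨fun hp => ⟨⟨p, ?_⟩, hp, rfl⟩, fun ⟨k, hk, hkp⟩ => hkp ▸ hk⟩
  simpa using lt_two_pow_iff_bitFinset_subset.1 hx (mem_bitFinset.2 hp)

theorem digitPerm_lt_two_pow_s8 (σ : Equiv.Perm (Fin N)) (x : ℕ) : digitPerm σ x < 2 ^ N := by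
  rw [lt_two_pow_iff_bitFinset_subset, bitFinset_digitPerm]
  intro p hp
  simp only [mem_map, Function.Embedding.trans_apply, Equiv.coe_toEmbedding,
    Fin.valEmbedding_apply] at hp
  obtain ⟨k, -, rfl⟩ := hp
  exact mem_range.2 (σ k).isLt

theorem digitPerm_swap_lt {x : ℕ} (hx : x < 2 ^ N) {p q : Fin N} (hpq : p < q)
    (hp : x.testBit p = false) (hq : x.testBit q) : digitPerm (Equiv.swap p q) x < x := by
  conv_rhs => rw [← sum_two_pow_bitFinset x, bitFinset_eq_map_of_lt hx, sum_map]
  rw [← sum_two_pow_bitFinset (digitPerm _ x), bitFinset_digitPerm, sum_map]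
  refine sum_lt_sum (fun k hk => Nat.pow_le_pow_right two_pos ?_) ⟨q, by simpa using hq, ?_⟩
  · rcases eq_or_ne k q with rfl | hkq
    · simpa using hpq.le
    · have hkp : k ≠ p := by rintro rfl; simp [hp] at hk
      simp [Equiv.swap_apply_of_ne_of_ne hkp hkq]
  · simpa using Nat.pow_lt_pow_right (by norm_num) hpq

end DigitPerm

def onesFrom (k x : ℕ) : ℕ := #{p ∈ bitFinset x | k ≤ p}

theorem onesFrom_le_onesFrom_of_subset {k x y : ℕ} (h : bitFinset x ⊆ bitFinset y) :
    onesFrom k x ≤ onesFrom k y :=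
  card_le_card (filter_subset_filter _ h)

theorem onesFrom_eq_card_add {a b : ℕ} (x : ℕ) (hab : a ≤ b) :
    onesFrom a x = #(Ico a b ∩ bitFinset x) + onesFrom b x := by
  rw [onesFrom, onesFrom, ← card_union_of_disjoint]
  · congr 1
    ext p
    by_cases hp : p ∈ bitFinset x <;> simp [hp]
    omega
  · rw [disjoint_left]
    intro p hp hp'
    simp only [mem_filter, mem_inter, mem_Ico] at hp hp'
    omega

theorem onesFrom_eq_zero {N k x : ℕ} (hx : x < 2 ^ N) (hk : N ≤ k) : onesFrom k x = 0 := by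
  rw [onesFrom, card_eq_zero, filter_eq_empty_iff]
  intro p hp
  have := mem_range.1 (lt_two_pow_iff_bitFinset_subset.1 hx hp)
  omega

theorem onesFrom_leftSwap {x l : ℕ} (hl : l ∈ bitFinset x) (hl1 : l + 1 ∉ bitFinset x) (k : ℕ) :
    onesFrom k (x - 2 ^ l + 2 ^ (l + 1)) = onesFrom k x + if k = l + 1 then 1 else 0 := by
  have hl1' : l + 1 ∉ {p ∈ bitFinset x | k ≤ p}.erase l := fun h =>
    hl1 (mem_filter.1 (mem_of_mem_erase h)).1
  rw [onesFrom, onesFrom, bitFinset_leftSwap hl hl1, filter_insert, filter_erase, apply_ite card,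
    card_insert_of_notMem hl1', card_erase_eq_ite]
  have hcard : k ≤ l → 0 < #{p ∈ bitFinset x | k ≤ p} := fun hk =>
    card_pos.2 ⟨l, mem_filter.2 ⟨hl, hk⟩⟩
  simp only [mem_filter, hl, true_and]
  split_ifs <;> omega

theorem onesFrom_digitPerm {N B x : ℕ} {σ : Equiv.Perm (Fin N)} (hx : x < 2 ^ N)
    (hσ : ∀ p : Fin N, B ≤ (σ p : ℕ) ↔ B ≤ p) : onesFrom B (digitPerm σ x) = onesFrom B x := by
  rw [onesFrom, onesFrom, bitFinset_digitPerm, bitFinset_eq_map_of_lt hx, filter_map, filter_map,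
    card_map, card_map, filter_filter, filter_filter]
  simp only [Function.comp_apply, Function.Embedding.trans_apply, Equiv.coe_toEmbedding,
    Fin.valEmbedding_apply, hσ]

namespace UPO

theorem mono {n N i j : ℕ} (hnN : n ≤ N) (h : UPO n i j) : UPO N i j := by
  refine Relation.ReflTransGen.mono (fun a b hab => ?_) _ _ h
  rcases hab with ⟨l, hl, hab⟩ | ⟨hb, hab⟩
  · exact Or.inl ⟨l, by omega, hab⟩
  · exact Or.inr ⟨hb.trans_le (Nat.pow_le_pow_right two_pos hnN), hab⟩

theorem onesFrom_le {N i j : ℕ} (h : UPO N i j) (k : ℕ) : onesFrom k i ≤ onesFrom k j := by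
  induction h with
  | refl => exact le_rfl
  | tail _ hstep ih =>
    refine ih.trans ?_
    rcases hstep with ⟨l, -, hl, hl1, rfl⟩ | ⟨-, hle⟩
    · rw [onesFrom_leftSwap (by simpa using hl) (by simpa using hl1)]
      omega
    · refine onesFrom_le_onesFrom_of_subset fun p hp => ?_
      simpa using Bool.le_iff_imp.1 (hle p) (by simpa using hp)

end UPO

theorem upo_of_onesFrom_le {N i j : ℕ} (hi : i < 2 ^ N) (hj : j < 2 ^ N)
    (h : ∀ k, onesFrom k i ≤ onesFrom k j) : UPO N i j := by
  induction hd : 2 ^ N - i using Nat.strong_induction_on generalizing i with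
  | _ d ih =>
  by_cases hsub : bitFinset i ⊆ bitFinset j
  · refine .single (Or.inr ⟨hj, fun k => Bool.le_iff_imp.2 fun hk => ?_⟩)
    simpa using hsub (mem_bitFinset.2 hk)
  obtain ⟨p, hpi, hpj⟩ := not_subset.1 hsub
  obtain ⟨l, hpl, hrun, hl1⟩ := exists_run_end hpi
  have hl : l ∈ bitFinset i := hrun (by simp [hpl])
  -- `i` has a full run of ones on `[p, l]`, while `j` misses `p` there.
  have hmore : onesFrom (l + 1) i < onesFrom (l + 1) j := by
    have hi_split := onesFrom_eq_card_add i (show p ≤ l + 1 by omega)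
    have hj_split := onesFrom_eq_card_add j (show p ≤ l + 1 by omega)
    rw [inter_eq_left.2 hrun, Nat.card_Ico] at hi_split
    have : Ico p (l + 1) ∩ bitFinset j ⊆ Ico (p + 1) (l + 1) := fun q hq => by
      rw [mem_inter, mem_Ico] at hq
      rw [mem_Ico]
      refine ⟨lt_of_le_of_ne hq.1.1 ?_, hq.1.2⟩
      rintro rfl
      exact hpj hq.2
    have := (card_le_card this).trans_eq (Nat.card_Ico _ _)
    have := h p
    omega
  have hlN : l + 1 < N := by
    by_contra hN
    rw [onesFrom_eq_zero hj (by omega)] at hmore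
    omega
  have hswap := bitFinset_leftSwap hl hl1
  have hi' : i - 2 ^ l + 2 ^ (l + 1) < 2 ^ N := by
    rw [lt_two_pow_iff_bitFinset_subset, hswap]
    refine insert_subset (mem_range.2 hlN) ((erase_subset _ _).trans ?_)
    exact lt_two_pow_iff_bitFinset_subset.1 hi
  have hgrow : i < i - 2 ^ l + 2 ^ (l + 1) := by
    have := Nat.ge_two_pow_of_testBit (mem_bitFinset.1 hl)
    have := Nat.two_pow_pos l
    rw [pow_succ]
    omega
  have hstep : LeftSwapStep N i (i - 2 ^ l + 2 ^ (l + 1)) :=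
    ⟨l, hlN, by simpa using hl, by simpa using hl1, rfl⟩
  refine .head (Or.inl hstep) (ih _ (by omega) hi' (fun k => ?_) rfl)
  rw [onesFrom_leftSwap hl hl1]
  have := h k
  split_ifs with hk
  · subst hk
    omega
  · omega

section Blocks

variable {s : List ℕ}

theorem exists_block {p : ℕ} (hp : p < s.sum) :
    ∃ r < s.length, (s.take r).sum ≤ p ∧ p < (s.take (r + 1)).sum := by
  have hlen : 0 < s.length := List.length_pos_iff.2 (by rintro rfl; simp at hp)
  have hlast : p < (s.take (s.length - 1 + 1)).sum := by
    rwa [Nat.sub_add_cancel hlen, List.take_length]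
  have hex : ∃ r, p < (s.take (r + 1)).sum := ⟨_, hlast⟩
  refine ⟨Nat.find hex, by have := Nat.find_le (h := hex) hlast; omega, ?_, Nat.find_spec hex⟩
  rcases Nat.eq_zero_or_eq_succ_pred (Nat.find hex) with h0 | hsucc
  · simp [h0]
  · rw [hsucc]
    exact not_lt.1 (Nat.find_min hex (by omega))

theorem le_iff_of_mem_block {k p q : ℕ}
    (hp : (s.take k).sum ≤ p ∧ p < (s.take (k + 1)).sum)
    (hq : (s.take k).sum ≤ q ∧ q < (s.take (k + 1)).sum) (r : ℕ) :
    (s.take r).sum ≤ p ↔ (s.take r).sum ≤ q := by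
  rcases le_or_gt r k with hrk | hrk
  · have : (s.take r).sum ≤ (s.take k).sum := List.monotone_sum_take s hrk
    exact iff_of_true (by omega) (by omega)
  · have : (s.take (k + 1)).sum ≤ (s.take r).sum := List.monotone_sum_take s hrk
    exact iff_of_false (by omega) (by omega)

theorem BlockPreserving.le_apply_iff {n : ℕ} {σ : Equiv.Perm (Fin n)} (hσ : BlockPreserving s σ)
    (hn : n ≤ s.sum) (r : ℕ) (p : Fin n) : (s.take r).sum ≤ σ p ↔ (s.take r).sum ≤ p := by
  obtain ⟨k, hk, hp⟩ := exists_block (show (p : ℕ) < s.sum by omega)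
  exact le_iff_of_mem_block (hσ k hk p hp.1 hp.2) hp r

theorem blockPreserving_of_le_apply_iff {n : ℕ} {σ : Equiv.Perm (Fin n)}
    (h : ∀ r (p : Fin n), (s.take r).sum ≤ σ p ↔ (s.take r).sum ≤ p) : BlockPreserving s σ :=
  fun k _ p hkp hpk => ⟨(h k p).2 hkp, not_le.1 fun hle => not_le.2 hpk ((h (k + 1) p).1 hle)⟩

end Blocks

theorem le_swap_apply_iff {n B : ℕ} {p q : Fin n} (h : B ≤ p ↔ B ≤ q) (x : Fin n) :
    B ≤ (Equiv.swap p q x : ℕ) ↔ B ≤ x := by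
  rw [Equiv.swap_apply_def]
  split_ifs with hp hq
  · exact hp ▸ h.symm
  · exact hq ▸ h
  · rfl

def BlockPacked (s : List ℕ) (y : ℕ) : Prop :=
  ∀ r p q, (s.take r).sum ≤ p → p ≤ q → q < (s.take (r + 1)).sum → y.testBit q → y.testBit p

theorem exists_blockPacked {n : ℕ} {s : List ℕ} {I : Set ℕ}
    (hI : ∀ σ : Equiv.Perm (Fin n), BlockPreserving s σ → Stabilizes σ I)
    {x : ℕ} (hxI : x ∈ I) (hx : x < 2 ^ n) :
    ∃ y ∈ I, y < 2 ^ n ∧ BlockPacked s y ∧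
      ∀ r, onesFrom (s.take r).sum y = onesFrom (s.take r).sum x := by
  -- A transposition inside a block moving a misplaced `1` down decreases the number.
  induction x using Nat.strong_induction_on with
  | _ x ih =>
  by_cases hpacked : BlockPacked s x
  · exact ⟨x, hxI, hx, hpacked, fun _ => rfl⟩
  simp only [BlockPacked, not_forall, Bool.not_eq_true] at hpacked
  obtain ⟨k, p, q, hkp, hpq, hqk, hq, hp⟩ := hpacked
  have hqn : q < n := (Nat.pow_lt_pow_iff_right (by norm_num)).1
    ((Nat.ge_two_pow_of_testBit hq).trans_lt hx)
  set τ := Equiv.swap (⟨p, by omega⟩ : Fin n) ⟨q, hqn⟩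
  have hτ (r : ℕ) (a : Fin n) : (s.take r).sum ≤ τ a ↔ (s.take r).sum ≤ a :=
    le_swap_apply_iff (le_iff_of_mem_block ⟨hkp, by omega⟩ ⟨by omega, hqk⟩ r) a
  have hlt : digitPerm τ x < x := by
    refine digitPerm_swap_lt hx (Fin.mk_lt_mk.2 (lt_of_le_of_ne hpq ?_)) hp hq
    rintro rfl
    simp [hp] at hq
  obtain ⟨y, hyI, hy, hyp, hyo⟩ := ih _ hlt (hI τ (blockPreserving_of_le_apply_iff hτ) x hxI)
    (digitPerm_lt_two_pow_s8 τ x)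
  exact ⟨y, hyI, hy, hyp, fun r => (hyo r).trans (onesFrom_digitPerm hx (hτ r))⟩

theorem onesFrom_le_of_blockPacked {s : List ℕ} {y z : ℕ} (hy : y < 2 ^ s.sum)
    (hpacked : BlockPacked s y)
    (h : ∀ r < s.length, onesFrom (s.take r).sum y ≤ onesFrom (s.take r).sum z) (k : ℕ) :
    onesFrom k y ≤ onesFrom k z := by
  rcases le_or_gt s.sum k with hk | hk
  · simp [onesFrom_eq_zero hy hk]
  obtain ⟨r, hr, hrk, hkr⟩ := exists_block hk
  by_cases hrun : ∃ q ∈ bitFinset y, k ≤ q ∧ q < (s.take (r + 1)).sum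
  · obtain ⟨q, hq, hkq, hqb⟩ := hrun
    have hfull : Ico (s.take r).sum k ⊆ bitFinset y := fun p hp => by
      rw [mem_Ico] at hp
      exact mem_bitFinset.2 (hpacked r p q hp.1 (by omega) hqb (mem_bitFinset.1 hq))
    have hy_split := onesFrom_eq_card_add y hrk
    have hz_split := onesFrom_eq_card_add z hrk
    rw [inter_eq_left.2 hfull, Nat.card_Ico] at hy_split
    have := (card_le_card (inter_subset_left (s₂ := bitFinset z))).trans_eq
      (Nat.card_Ico (s.take r).sum k)
    have := h r hr
    omega
  · have hy_split := onesFrom_eq_card_add y hkr.le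
    have hz_split := onesFrom_eq_card_add z hkr.le
    have hempty : Ico k (s.take (r + 1)).sum ∩ bitFinset y = ∅ := by
      ext q
      simp only [mem_inter, mem_Ico, notMem_empty, iff_false]
      exact fun hq => hrun ⟨q, hq.2, hq.1⟩
    rw [hempty, card_empty, zero_add] at hy_split
    have hb : onesFrom (s.take (r + 1)).sum y ≤ onesFrom (s.take (r + 1)).sum z := by
      rcases lt_or_ge (r + 1) s.length with hr1 | hr1
      · exact h _ hr1
      · rw [onesFrom_eq_zero hy (by simp [List.take_of_length_le hr1])]
        exact Nat.zero_le _
    omega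

theorem symmetric_supercodes_general {n : ℕ} (S : Set ℕ) (hS : S ⊆ Set.Iio (2 ^ n))
    (s : List ℕ) (hne : s ≠ []) (hsum : s.sum = n)
    (hstab : ∀ σ : Equiv.Perm (Fin n), BlockPreserving s σ →
      Stabilizes σ (upoClosure n S))
    (t : ℕ) (s' : List ℕ) (hs' : s' = s.dropLast ++ [s.getLast hne + t]) :
    ∀ σ' : Equiv.Perm (Fin (n + t)), BlockPreserving s' σ' →
      Stabilizes σ' (upoClosure (n + t) S) := by
  subst hsum hs'
  intro σ' hσ' j ⟨hj, i₀, hi₀S, hi₀j⟩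
  have hi₀ : i₀ < 2 ^ s.sum := hS hi₀S
  have hpow : 2 ^ s.sum ≤ 2 ^ (s.sum + t) := Nat.pow_le_pow_right two_pos (by omega)
  have hlast := List.dropLast_append_getLast hne
  have hsum' : (s.dropLast ++ [s.getLast hne + t]).sum = s.sum + t := by
    conv_rhs => rw [← hlast]
    simp [add_assoc]
  have htake (r : ℕ) (hr : r < s.length) :
      ((s.dropLast ++ [s.getLast hne + t]).take r).sum = (s.take r).sum := by
    rw [List.take_append_of_le_length (by rw [List.length_dropLast]; omega), List.dropLast_eq_take, List.take_take,
      min_eq_left (by omega)]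
  obtain ⟨y, hyI, hy, hpacked, hy_ones⟩ :=
    exists_blockPacked hstab ⟨hi₀, i₀, hi₀S, .refl⟩ hi₀
  obtain ⟨-, i₁, hi₁S, hi₁y⟩ := hyI
  have hσ'j := digitPerm_lt_two_pow_s8 σ' j
  refine ⟨hσ'j, i₁, hi₁S, .trans (hi₁y.mono (by omega)) ?_⟩
  refine upo_of_onesFrom_le (hy.trans_le hpow) hσ'j ?_
  refine onesFrom_le_of_blockPacked hy hpacked fun r hr => ?_
  rw [hy_ones, onesFrom_digitPerm hj fun p => htake r hr ▸ hσ'.le_apply_iff hsum'.ge r p]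
  exact hi₀j.onesFrom_le _

/-- **Symmetric Supercodes.** If every `s`-block-preserving permutation stabilizes the
UPO closure of `S` at `n` bits, then every `[s₁,…,s_{m−1}, s_m + t]`-block-preserving
permutation of `Fin (n + t)` stabilizes the UPO closure of `S` at `n + t` bits. -/
theorem symmetric_supercodes {n : ℕ} (S : Set ℕ) (hS : S ⊆ Set.Iio (2 ^ n))
    (s : List ℕ) (hne : s ≠ []) (hpos : ∀ x ∈ s, 0 < x) (hsum : s.sum = n)
    (hstab : ∀ σ : Equiv.Perm (Fin n), BlockPreserving s σ →
      Stabilizes σ (upoClosure n S))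
    (t : ℕ) (s' : List ℕ) (hs' : s' = s.dropLast ++ [s.getLast hne + t]) :
    ∀ σ' : Equiv.Perm (Fin (n + t)), BlockPreserving s' σ' →
      Stabilizes σ' (upoClosure (n + t) S) :=
  symmetric_supercodes_general S hS s hne hsum hstab t s' hs'
end

section
/- For every n : ℕ, the polar transform matrix satisfies G_n · G_n = 1 (the 2^n × 2^n identity matrix) over 𝔽₂; in particular, G_n is invertible and equal to its own inverse. -/
open Classical in
/-- The polar transform matrix `G_n`: the `n`-th Kronecker power of `[[1,0],[1,1]]`;
its `(i, j)` entry is `1` iff every binary digit of `j` is dominated by that of `i`. -/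
noncomputable def polarG (n : ℕ) : Matrix (Fin (2 ^ n)) (Fin (2 ^ n)) (ZMod 2) :=
  Matrix.of fun i j =>
    if ∀ k, Nat.testBit (j : ℕ) k ≤ Nat.testBit (i : ℕ) k then 1 else 0

/-- The polar transform is an involution: `G_n · G_n = 1` over `𝔽₂`. -/
theorem polarG_mul_self (n : ℕ) : polarG n * polarG n = 1 := by
  classical
  ext i j
  rw [Matrix.mul_apply]
  simp only [polarG, Matrix.of_apply]
  have hcomb : ∀ k : Fin (2 ^ n),
      (if ∀ b, Nat.testBit (k : ℕ) b ≤ Nat.testBit (i : ℕ) b then (1 : ZMod 2) else 0) *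
        (if ∀ b, Nat.testBit (j : ℕ) b ≤ Nat.testBit (k : ℕ) b then 1 else 0) =
      if (∀ b, Nat.testBit (j : ℕ) b ≤ Nat.testBit (k : ℕ) b) ∧
         (∀ b, Nat.testBit (k : ℕ) b ≤ Nat.testBit (i : ℕ) b) then 1 else 0 := by
    intro k; split_ifs <;> simp_all
  rw [Finset.sum_congr rfl fun k _ => hcomb k]
  by_cases hij : i = j
  · subst hij
    rw [Finset.sum_eq_single i, if_pos ⟨fun b => le_refl _, fun b => le_refl _⟩,
      Matrix.one_apply_eq]
    · intro k _ hk
      rw [if_neg]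
      rintro ⟨h1, h2⟩
      exact hk (Fin.ext (Nat.eq_of_testBit_eq fun b => le_antisymm (h2 b) (h1 b)))
    · intro h; exact absurd (Finset.mem_univ i) h
  · rw [Matrix.one_apply_ne hij]
    by_cases hji : ∀ b, Nat.testBit (j : ℕ) b ≤ Nat.testBit (i : ℕ) b
    · -- pick a bit where i and j differ
      have hne : (i : ℕ) ≠ (j : ℕ) := fun h => hij (Fin.ext h)
      obtain ⟨b, hb⟩ : ∃ b, Nat.testBit (i : ℕ) b ≠ Nat.testBit (j : ℕ) b := by
        by_contra h
        push_neg at h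
        exact hne (Nat.eq_of_testBit_eq h)
      have hib : Nat.testBit (i : ℕ) b = true := by
        have := hji b
        revert hb this
        cases Nat.testBit (i : ℕ) b <;> cases Nat.testBit (j : ℕ) b <;> simp
      have hjb : Nat.testBit (j : ℕ) b = false := by
        cases hj : Nat.testBit (j : ℕ) b with
        | false => rfl
        | true => exact absurd (hib.trans hj.symm) hb
      have hbn : b < n := by
        by_contra h
        push_neg at h
        have : (i : ℕ) < 2 ^ b := lt_of_lt_of_le i.isLt (Nat.pow_le_pow_right (by norm_num) h)
        rw [Nat.testBit_lt_two_pow this] at hib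
        exact Bool.false_ne_true hib
      have h2b : 2 ^ b < 2 ^ n := Nat.pow_lt_pow_right (by norm_num) hbn
      set P : Fin (2 ^ n) → Prop := fun k =>
        (∀ c, Nat.testBit (j : ℕ) c ≤ Nat.testBit (k : ℕ) c) ∧
        (∀ c, Nat.testBit (k : ℕ) c ≤ Nat.testBit (i : ℕ) c) with hP
      have key : ∀ k : Fin (2 ^ n), P k →
          P ⟨(k : ℕ) ^^^ 2 ^ b, Nat.xor_lt_two_pow k.isLt h2b⟩ := by
        rintro k ⟨h1, h2⟩
        constructor <;> intro c <;> simp only [Nat.testBit_xor, Nat.testBit_two_pow]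
        · by_cases hc : b = c
          · subst hc; rw [hjb]; exact Bool.false_le _
          · simp [hc, h1 c]
        · by_cases hc : b = c
          · subst hc; rw [hib]; exact Bool.le_true _
          · simp [hc, h2 c]
      have hginv : ∀ k : Fin (2 ^ n),
          ((((k : ℕ) ^^^ 2 ^ b) ^^^ 2 ^ b) : ℕ) = (k : ℕ) := by
        intro k; rw [Nat.xor_assoc, Nat.xor_self, Nat.xor_zero]
      refine Finset.sum_involution
        (fun k _ => ⟨(k : ℕ) ^^^ 2 ^ b, Nat.xor_lt_two_pow k.isLt h2b⟩) ?_ ?_ (fun _ _ => Finset.mem_univ _) ?_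
      · intro k _
        by_cases hk : P k
        · rw [if_pos hk, if_pos (key k hk)]; decide
        · rw [if_neg hk, if_neg ?_, add_zero]
          intro hk'
          apply hk
          have := key _ hk'
          simp only [hP] at this ⊢
          rw [hginv k] at this
          exact this
      · intro k _ _ heq
        have hv : ((k : ℕ) ^^^ 2 ^ b) = (k : ℕ) := congrArg Fin.val heq
        have := congrArg (fun m => Nat.testBit m b) hv
        simp [Nat.testBit_xor, Nat.testBit_two_pow] at this
      · intro k _
        exact Fin.ext (hginv k)
    · rw [Finset.sum_eq_zero]
      intro k _
      rw [if_neg]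
      rintro ⟨h1, h2⟩
      exact hji fun c => le_trans (h1 c) (h2 c)
end

section
/- Let n ≥ 1 and let I ⊆ {0,…,2^n − 1} be UPO-compliant at n bits. Then the low nested subset I^ℓ and the high nested subset I^h are both UPO-compliant at n−1 bits. -/

private lemma lt_pow_of_bit_false {x k : ℕ} (hx : x < 2 ^ (k + 1))
    (hb : Nat.testBit x k = false) : x < 2 ^ k := by
  by_contra h
  push_neg at h
  have hs : x - 2 ^ k < 2 ^ k := by
    have : 2 ^ (k+1) = 2 ^ k + 2 ^ k := by ring
    omega
  have : Nat.testBit (2 ^ k + (x - 2 ^ k)) k = !Nat.testBit (x - 2 ^ k) k :=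
    Nat.testBit_two_pow_add_eq _ _
  rw [Nat.testBit_lt_two_pow hs] at this
  rw [show 2 ^ k + (x - 2 ^ k) = x by omega] at this
  simp [hb] at this

private lemma add_pow_lt {i l m : ℕ} (hl1 : l + 1 < m) (hi : i < 2 ^ m)
    (hb : Nat.testBit i (l + 1) = false) : i + 2 ^ l < 2 ^ m := by
  set r := i % 2 ^ (l + 2) with hr
  have hrb : Nat.testBit r (l + 1) = false := by
    rw [hr, Nat.testBit_mod_two_pow]
    simp [hb]
  have hrlt : r < 2 ^ (l + 2) := Nat.mod_lt _ (by positivity)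
  have hr1 : r < 2 ^ (l + 1) := lt_pow_of_bit_false hrlt hrb
  have hq : i / 2 ^ (l + 2) < 2 ^ (m - (l + 2)) := by
    apply Nat.div_lt_of_lt_mul
    rw [← pow_add]
    rwa [show l + 2 + (m - (l + 2)) = m by omega]
  have hdecomp : i = 2 ^ (l + 2) * (i / 2 ^ (l + 2)) + r := (Nat.div_add_mod i _).symm
  have h2 : i + 2 ^ l < 2 ^ (l + 2) * (i / 2 ^ (l + 2) + 1) := by
    rw [Nat.mul_succ]
    have : r + 2 ^ l < 2 ^ (l + 2) := by
      have e1 : 2 ^ (l + 1) = 2 * 2 ^ l := by ring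
      have e2 : 2 ^ (l + 2) = 4 * 2 ^ l := by ring
      omega
    omega
  calc i + 2 ^ l < 2 ^ (l + 2) * (i / 2 ^ (l + 2) + 1) := h2
    _ ≤ 2 ^ (l + 2) * 2 ^ (m - (l + 2)) := by
        apply Nat.mul_le_mul_left; omega
    _ = 2 ^ m := by rw [← pow_add]; congr 1; omega

private lemma step_low {m i j : ℕ} (hi : i < 2 ^ m)
    (h : LeftSwapStep m i j ∨ BinDomStep m i j) :
    (LeftSwapStep (m + 1) i j ∨ BinDomStep (m + 1) i j) ∧ j < 2 ^ m := by
  rcases h with ⟨l, hl, hbl, hbl1, hj⟩ | ⟨hjlt, hdom⟩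
  · have hge : 2 ^ l ≤ i := Nat.ge_two_pow_of_testBit hbl
    have hje : j = i + 2 ^ l := by
      have : 2 ^ (l + 1) = 2 * 2 ^ l := by ring
      omega
    refine ⟨Or.inl ⟨l, by omega, hbl, hbl1, hj⟩, ?_⟩
    rw [hje]; exact add_pow_lt hl hi hbl1
  · exact ⟨Or.inr ⟨lt_trans hjlt (by simpa using Nat.pow_lt_pow_succ one_lt_two), hdom⟩, hjlt⟩

private lemma step_high {m a b : ℕ} (ha : a < 2 ^ m)
    (h : LeftSwapStep m a b ∨ BinDomStep m a b) :
    (LeftSwapStep (m + 1) (a + 2 ^ m) (b + 2 ^ m) ∨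
      BinDomStep (m + 1) (a + 2 ^ m) (b + 2 ^ m)) ∧ b < 2 ^ m := by
  have hib : ∀ k, k < m → Nat.testBit (a + 2 ^ m) k = Nat.testBit a k := by
    intro k hk
    rw [Nat.add_comm, Nat.testBit_two_pow_add_gt hk]
  have hilt : a + 2 ^ m < 2 ^ (m + 1) := by
    have : 2 ^ (m + 1) = 2 ^ m + 2 ^ m := by ring
    omega
  rcases h with ⟨l, hl, hbl, hbl1, hj⟩ | ⟨hjlt, hdom⟩
  · have hge : 2 ^ l ≤ a := Nat.ge_two_pow_of_testBit hbl
    have hble : 2 ^ (l + 1) = 2 * 2 ^ l := by ring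
    refine ⟨Or.inl ⟨l, by omega, by rw [hib l (by omega)]; exact hbl,
      by rw [hib (l+1) (by omega)]; exact hbl1, by omega⟩, ?_⟩
    have : b = a + 2 ^ l := by omega
    rw [this]; exact add_pow_lt hl ha hbl1
  · refine ⟨Or.inr ⟨by omega, ?_⟩, hjlt⟩
    intro k
    rcases lt_trichotomy k m with hk | rfl | hk
    · rw [hib k hk, Nat.add_comm b, Nat.testBit_two_pow_add_gt hk]
      exact hdom k
    · have : Nat.testBit (b + 2 ^ k) k = true := by
        rw [Nat.add_comm, Nat.testBit_two_pow_add_eq, Nat.testBit_lt_two_pow hjlt]; rfl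
      simp [this]
    · have : Nat.testBit (a + 2 ^ m) k = false := by
        apply Nat.testBit_lt_two_pow
        calc a + 2 ^ m < 2 ^ (m + 1) := hilt
          _ ≤ 2 ^ k := Nat.pow_le_pow_right (by norm_num) (by omega)
      simp [this]


/-- The nested subsets of a UPO-compliant set are UPO-compliant at one bit fewer. -/
theorem nested_upo_compliant {n : ℕ} (hn : 1 ≤ n) (I : Set ℕ)
    (hI : I ⊆ Set.Iio (2 ^ n)) (hcompl : UPOCompliant n I) :
    UPOCompliant (n - 1) (lowNested n I) ∧ UPOCompliant (n - 1) (highNested n I) := by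
  obtain ⟨m, rfl⟩ : ∃ m, n = m + 1 := ⟨n - 1, by omega⟩
  simp only [Nat.add_sub_cancel] at *
  constructor
  · rintro i ⟨hiI, hilt⟩ j hij
    suffices h : j ∈ I ∧ j < 2 ^ m from ⟨h.1, h.2⟩
    induction hij with
    | refl => exact ⟨hiI, hilt⟩
    | tail hab step ih =>
      obtain ⟨hbI, hblt⟩ := ih
      obtain ⟨step', hclt⟩ := step_low hblt step
      exact ⟨hcompl _ hbI _ (Relation.ReflTransGen.single step'), hclt⟩
  · rintro j ⟨i, hiI, hile, rfl⟩ j' hjj'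
    have hilt : i < 2 ^ (m + 1) := hI hiI
    simp only [Nat.add_sub_cancel] at hile hjj'
    have hi2 : i - 2 ^ m < 2 ^ m := by
      have : 2 ^ (m + 1) = 2 ^ m + 2 ^ m := by ring
      omega
    have hieq : (i - 2 ^ m) + 2 ^ m = i := by omega
    suffices h : j' + 2 ^ m ∈ I ∧ j' < 2 ^ m by
      refine ⟨j' + 2 ^ m, h.1, ?_, ?_⟩ <;> simp only [Nat.add_sub_cancel] <;> omega
    induction hjj' with
    | refl => exact ⟨by rwa [hieq], hi2⟩
    | tail hab step ih =>
      obtain ⟨hbI, hblt⟩ := ih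
      obtain ⟨step', hclt⟩ := step_high hblt step
      exact ⟨hcompl _ hbI _ (Relation.ReflTransGen.single step'), hclt⟩
end
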